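/- arXiv:2106.09836 — 2 statements merged into one kernel-verified Lean document; each statement's English description precedes it below -/
import Mathlib

section
/- Let f₁, f₂ : [0,∞) → ℝ be cadlag with nonnegative jumps and f₁(0⁻)=f₂(0⁻)=0, and let W(f₁,f₂)=(g₁,g₂) be the Pitman transform (g₁(t)=f₁(t)+s(0,t), g₂(t)=f₂(t)-s(0,t) with s(x,y)=sup_{z∈[x,y]}(f₂(z)-f₁(z⁻))). Then the following are equivalent: (i) g₁ = f₁; (ii) g₂ = f₂; (iii) (g₁,g₂) = (f₁,f₂); (iv) f₂(t) ≤ f₁(t⁻) for all t. -/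
open Filter Set

/-- Left limit with the convention `f(0⁻) = 0`. -/
noncomputable def lml (f : ℝ → ℝ) (z : ℝ) : ℝ := if z ≤ 0 then 0 else Function.leftLim f z

/-- Cadlag on `[0, ∞)`: right-continuous at every `x ≥ 0`, left limits exist at every `x > 0`. -/
def Cadlag (f : ℝ → ℝ) : Prop :=
  (∀ x : ℝ, 0 ≤ x → ContinuousWithinAt f (Set.Ici x) x) ∧
  (∀ x : ℝ, 0 < x → ∃ l : ℝ, Filter.Tendsto f (nhdsWithin x (Set.Iio x)) (nhds l))

/-- All jumps are nonnegative (with the convention `f(0⁻) = 0`). -/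
def NonnegJumps (f : ℝ → ℝ) : Prop := ∀ z : ℝ, 0 ≤ z → lml f z ≤ f z

/-- `S f₁ f₂ x y = sup_{z ∈ [x,y]} (f₂ z - f₁ (z⁻))`. -/
noncomputable def S (f₁ f₂ : ℝ → ℝ) (x y : ℝ) : ℝ :=
  sSup ((fun z => f₂ z - lml f₁ z) '' Set.Icc x y)

/-- `Sm f₁ f₂ x y = sup_{z ∈ [x,y)} (f₂ z - f₁ (z⁻))`. -/
noncomputable def Sm (f₁ f₂ : ℝ → ℝ) (x y : ℝ) : ℝ :=
  sSup ((fun z => f₂ z - lml f₁ z) '' Set.Ico x y)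

/-- First component of the Pitman transform. -/
noncomputable def Wp1 (f₁ f₂ : ℝ → ℝ) : ℝ → ℝ := fun t => f₁ t + S f₁ f₂ 0 t

/-- Second component of the Pitman transform. -/
noncomputable def Wp2 (f₁ f₂ : ℝ → ℝ) : ℝ → ℝ := fun t => f₂ t - S f₁ f₂ 0 t

/-!
Each component of the Pitman transform differs from `(f₁, f₂)` by `± S(0, t)`, so each of
(i)–(iii) says that `S(0, ·)` vanishes on `[0, ∞)`. The point `z = 0` contributes
`f₂(0) ≥ 0` (a nonnegative jump from `f₂(0⁻) = 0`), so `S(0, t) ≥ 0`, while `S(0, t) ≤ 0` says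
exactly that `f₂ ≤ f₁(·⁻)` on `[0, t]`. The supremum is a genuine one, not the junk value `0`
that `sSup` takes on an unbounded set, because a cadlag function and its left limits are bounded
on compact intervals.
-/

open Bornology Topology

theorem IsCompact.isBounded_image_of_forall_exists_mem_nhdsWithin {X Y : Type*}
    [TopologicalSpace X] [Bornology Y] {k : Set X} (hk : IsCompact k) {f : X → Y}
    (hf : ∀ x ∈ k, ∃ s ∈ 𝓝[k] x, IsBounded (f '' s)) : IsBounded (f '' k) := by
  choose! U hU hUb using hf
  obtain ⟨I, hIk, hcover⟩ := hk.elim_nhdsWithin_subcover U hU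
  refine ((isBounded_biUnion_finset I).2 fun x hx => hUb x (hIk x hx)).subset ?_
  rw [← image_iUnion₂]
  exact image_mono hcover

namespace Cadlag

variable {f : ℝ → ℝ}

theorem exists_mem_nhdsWithin_isBounded_image (hf : Cadlag f) {x : ℝ} (hx : 0 ≤ x) :
    ∃ s ∈ 𝓝[Ici 0] x, IsBounded (f '' s) := by
  obtain ⟨b, hb, hbB⟩ := Metric.exists_isBounded_image_of_tendsto (hf.1 x hx)
  rcases hx.eq_or_lt with rfl | hx
  · exact ⟨b, hb, hbB⟩
  obtain ⟨l, hl⟩ := hf.2 x hx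
  obtain ⟨a, ha, haB⟩ := Metric.exists_isBounded_image_of_tendsto hl
  have hab : a ∪ b ∈ 𝓝 x := by
    rw [← nhdsLT_sup_nhdsGE]
    exact union_mem_sup ha hb
  refine ⟨a ∪ b, mem_nhdsWithin_of_mem_nhds hab, ?_⟩
  rw [image_union]
  exact haB.union hbB

theorem isBounded_image_Icc (hf : Cadlag f) (t : ℝ) : IsBounded (f '' Icc 0 t) :=
  isCompact_Icc.isBounded_image_of_forall_exists_mem_nhdsWithin fun x hx =>
    (hf.exists_mem_nhdsWithin_isBounded_image hx.1).imp fun _ ⟨hs, hsB⟩ =>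
      ⟨nhdsWithin_mono x Icc_subset_Ici_self hs, hsB⟩

theorem lml_mem_closure_image_Icc (hf : Cadlag f) {z t : ℝ} (hz : 0 < z) (hzt : z ≤ t) :
    lml f z ∈ closure (f '' Icc 0 t) := by
  obtain ⟨l, hl⟩ := hf.2 z hz
  rw [lml, if_neg hz.not_ge, leftLim_eq_of_tendsto hl]
  refine mem_closure_of_tendsto hl ?_
  filter_upwards [Ioo_mem_nhdsLT hz] with w hw
  exact mem_image_of_mem f ⟨hw.1.le, hw.2.le.trans hzt⟩

theorem isBounded_lml_image_Icc (hf : Cadlag f) (t : ℝ) : IsBounded (lml f '' Icc 0 t) := by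
  refine ((hf.isBounded_image_Icc t).closure.insert 0).subset ?_
  rintro _ ⟨z, hz, rfl⟩
  rcases hz.1.eq_or_lt with rfl | hz0
  · simp [lml]
  · exact mem_insert_of_mem _ (hf.lml_mem_closure_image_Icc hz0 hz.2)

end Cadlag

section Supremum

variable {f₁ f₂ : ℝ → ℝ}

theorem bddAbove_sub_lml_image_Icc (h₁ : Cadlag f₁) (h₂ : Cadlag f₂) (t : ℝ) :
    BddAbove ((fun z => f₂ z - lml f₁ z) '' Icc 0 t) := by
  obtain ⟨a, ha⟩ := (h₂.isBounded_image_Icc t).bddAbove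
  obtain ⟨b, hb⟩ := (h₁.isBounded_lml_image_Icc t).bddBelow
  refine ⟨a - b, forall_mem_image.2 fun z hz => ?_⟩
  exact sub_le_sub (ha (mem_image_of_mem f₂ hz)) (hb (mem_image_of_mem (lml f₁) hz))

theorem S_le_zero_iff (h₁ : Cadlag f₁) (h₂ : Cadlag f₂) {t : ℝ} (ht : 0 ≤ t) :
    S f₁ f₂ 0 t ≤ 0 ↔ ∀ z ∈ Icc 0 t, f₂ z ≤ lml f₁ z := by
  rw [S, csSup_le_iff (bddAbove_sub_lml_image_Icc h₁ h₂ t) ((nonempty_Icc.2 ht).image _),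
    forall_mem_image]
  simp only [sub_nonpos]

theorem S_nonneg (h₁ : Cadlag f₁) (h₂ : Cadlag f₂) (hj₂ : NonnegJumps f₂) {t : ℝ} (ht : 0 ≤ t) :
    0 ≤ S f₁ f₂ 0 t := by
  have hf₂ : 0 ≤ f₂ 0 := by simpa [lml] using hj₂ 0 le_rfl
  refine hf₂.trans (le_csSup (bddAbove_sub_lml_image_Icc h₁ h₂ t) ⟨0, ⟨le_rfl, ht⟩, ?_⟩)
  simp [lml]

theorem forall_S_eq_zero_iff (h₁ : Cadlag f₁) (h₂ : Cadlag f₂) (hj₂ : NonnegJumps f₂) :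
    (∀ t, 0 ≤ t → S f₁ f₂ 0 t = 0) ↔ ∀ t, 0 ≤ t → f₂ t ≤ lml f₁ t := by
  constructor
  · intro hS t ht
    exact (S_le_zero_iff h₁ h₂ ht).1 (hS t ht).le t ⟨ht, le_rfl⟩
  · intro hD t ht
    exact le_antisymm ((S_le_zero_iff h₁ h₂ ht).2 fun z hz => hD z hz.1) (S_nonneg h₁ h₂ hj₂ ht)

end Supremum

theorem stmt5_general (f₁ f₂ : ℝ → ℝ) (h₁ : Cadlag f₁) (h₂ : Cadlag f₂)
    (hj₂ : NonnegJumps f₂) :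
    ((∀ t : ℝ, 0 ≤ t → Wp1 f₁ f₂ t = f₁ t) ↔ (∀ t : ℝ, 0 ≤ t → f₂ t ≤ lml f₁ t)) ∧
    ((∀ t : ℝ, 0 ≤ t → Wp2 f₁ f₂ t = f₂ t) ↔ (∀ t : ℝ, 0 ≤ t → f₂ t ≤ lml f₁ t)) ∧
    ((∀ t : ℝ, 0 ≤ t → Wp1 f₁ f₂ t = f₁ t ∧ Wp2 f₁ f₂ t = f₂ t) ↔
      (∀ t : ℝ, 0 ≤ t → f₂ t ≤ lml f₁ t)) := by
  simp only [Wp1, Wp2, add_eq_left, sub_eq_self, and_self, forall_S_eq_zero_iff h₁ h₂ hj₂]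

theorem stmt5 (f₁ f₂ : ℝ → ℝ) (h₁ : Cadlag f₁) (h₂ : Cadlag f₂)
    (hj₁ : NonnegJumps f₁) (hj₂ : NonnegJumps f₂) :
    ((∀ t : ℝ, 0 ≤ t → Wp1 f₁ f₂ t = f₁ t) ↔ (∀ t : ℝ, 0 ≤ t → f₂ t ≤ lml f₁ t)) ∧
    ((∀ t : ℝ, 0 ≤ t → Wp2 f₁ f₂ t = f₂ t) ↔ (∀ t : ℝ, 0 ≤ t → f₂ t ≤ lml f₁ t)) ∧
    ((∀ t : ℝ, 0 ≤ t → Wp1 f₁ f₂ t = f₁ t ∧ Wp2 f₁ f₂ t = f₂ t) ↔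
      (∀ t : ℝ, 0 ≤ t → f₂ t ≤ lml f₁ t)) :=
  stmt5_general f₁ f₂ h₁ h₂ hj₂
end

section
/- In the equality s(x,y) - s(0,y) - s(0,x⁻) = sup_{z∈[x,y]} (s(z,z) - s(0,z) - s(0,z⁻)) holds, where s(x,y) = sup_{z∈[x,y]}(f₂(z) - f₁(z⁻)) for cadlag functions f₁, f₂ with nonnegative jumps on [0,∞) and 0 ≤ x ≤ y. -/
open Filter Set

/-!
Write `g z = f₂ z - f₁ (z⁻)`, `A = sup_{[0,x)} g` and `B = sup_{[x,y]} g`; since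
`s(0,y) = max A B`, the left side is `min A B - 2A`. For `z ∈ [x,y]` the running suprema give
`g z - s(0,z) - s(0,z⁻) ≤ min (g z) A - 2A`, with equality as soon as `g ≤ A` on `[x,z)`. So the
supremum on the right is attained at the first `z ≥ x` with `g z ≥ min A B`. This first passage
exists because nonnegative jumps make `f₂` and `-f₁(·⁻)`, hence `g`, upper semicontinuous, and
the upper level sets of an upper semicontinuous function on `[x,y]` are compact.
-/

open Topology Function

theorem UpperSemicontinuousWithinAt.union {α β : Type*} [TopologicalSpace α] [Preorder β]
    {f : α → β} {s t : Set α} {x : α} (hs : UpperSemicontinuousWithinAt f s x)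
    (ht : UpperSemicontinuousWithinAt f t x) : UpperSemicontinuousWithinAt f (s ∪ t) x :=
  fun c hc => by
    rw [nhdsWithin_union]
    exact eventually_sup.2 ⟨hs c hc, ht c hc⟩

theorem upperSemicontinuousWithinAt_insert_of_tendsto {α β : Type*} [TopologicalSpace α]
    [LinearOrder β] [TopologicalSpace β] [OrderTopology β] {f : α → β} {s : Set α} {x : α}
    {a : β} (h : Tendsto f (𝓝[s] x) (𝓝 a)) (ha : a ≤ f x) :
    UpperSemicontinuousWithinAt f (insert x s) x :=
  fun c hc => by
    rw [nhdsWithin_insert]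
    exact eventually_sup.2 ⟨hc, h.eventually_lt_const (ha.trans_lt hc)⟩

theorem upperSemicontinuousOn_Ici_of_left_right {β : Type*} [Preorder β] {f : ℝ → β} {a : ℝ}
    (hr : ∀ z, a ≤ z → UpperSemicontinuousWithinAt f (Ici z) z)
    (hl : ∀ z, a < z → UpperSemicontinuousWithinAt f (Iic z) z) :
    UpperSemicontinuousOn f (Ici a) := by
  intro z hz
  rcases (mem_Ici.1 hz).eq_or_lt with rfl | hlt
  · exact hr _ le_rfl
  · have h := (hl z hlt).union (hr z hz)
    rw [Iic_union_Ici] at h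
    exact h.mono (subset_univ _)

theorem tendsto_leftLim_nhdsGT_of_tendsto {β : Type*} [TopologicalSpace β] [RegularSpace β]
    {f : ℝ → β} {a : ℝ} {L : β} (h : Tendsto f (𝓝[>] a) (𝓝 L))
    (hl : ∀ᶠ w in 𝓝[>] a, Tendsto f (𝓝[<] w) (𝓝 (leftLim f w))) :
    Tendsto (leftLim f) (𝓝[>] a) (𝓝 L) := by
  rw [(closed_nhds_basis L).tendsto_right_iff]
  rintro C ⟨hC, hCclosed⟩
  filter_upwards [eventually_eventually_nhdsWithin.2 (h hC), hl, self_mem_nhdsWithin]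
    with w hw hlw hwa
  rw [isOpen_Ioi.nhdsWithin_eq hwa] at hw
  exact hCclosed.mem_of_tendsto hlw (hw.filter_mono nhdsWithin_le_nhds)

theorem lml_of_pos {f : ℝ → ℝ} {z : ℝ} (hz : 0 < z) : lml f z = leftLim f z :=
  if_neg hz.not_ge

theorem lml_eventuallyEq_leftLim (f : ℝ → ℝ) {l : Filter ℝ} (h : ∀ᶠ w in l, 0 < w) :
    lml f =ᶠ[l] leftLim f :=
  h.mono fun _ hw => lml_of_pos hw

namespace Cadlag

variable {f : ℝ → ℝ}

theorem tendsto_nhdsLT (hf : Cadlag f) {z : ℝ} (hz : 0 < z) :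
    Tendsto f (𝓝[<] z) (𝓝 (leftLim f z)) :=
  tendsto_leftLim_of_tendsto (hf.2 z hz)

theorem upperSemicontinuousOn (hf : Cadlag f) (hj : NonnegJumps f) :
    UpperSemicontinuousOn f (Ici 0) := by
  refine upperSemicontinuousOn_Ici_of_left_right
    (fun z hz => (hf.1 z hz).upperSemicontinuousWithinAt) fun z hz => ?_
  rw [← Iio_insert]
  refine upperSemicontinuousWithinAt_insert_of_tendsto (hf.tendsto_nhdsLT hz) ?_
  simpa only [lml_of_pos hz] using hj z hz.le

theorem tendsto_lml_nhdsGT (hf : Cadlag f) {z : ℝ} (hz : 0 ≤ z) :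
    Tendsto (lml f) (𝓝[>] z) (𝓝 (f z)) := by
  have hpos : ∀ᶠ w in 𝓝[>] z, 0 < w :=
    eventually_nhdsWithin_of_forall fun _ hw => hz.trans_lt hw
  refine Tendsto.congr' (lml_eventuallyEq_leftLim f hpos).symm ?_
  exact tendsto_leftLim_nhdsGT_of_tendsto ((hf.1 z hz).mono Ioi_subset_Ici_self)
    (hpos.mono fun _ hw => hf.tendsto_nhdsLT hw)

theorem continuousWithinAt_lml_Iic (hf : Cadlag f) {z : ℝ} (hz : 0 < z) :
    ContinuousWithinAt (lml f) (Iic z) z := by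
  refine (continuousWithinAt_leftLim_Iic (hf.tendsto_nhdsLT hz)).congr_of_eventuallyEq
    (lml_eventuallyEq_leftLim f ?_) (lml_of_pos hz)
  exact eventually_nhdsWithin_of_eventually_nhds (eventually_gt_nhds hz)

theorem upperSemicontinuousOn_neg_lml (hf : Cadlag f) (hj : NonnegJumps f) :
    UpperSemicontinuousOn (fun z => -lml f z) (Ici 0) := by
  refine upperSemicontinuousOn_Ici_of_left_right (fun z hz => ?_) fun z hz =>
    (hf.continuousWithinAt_lml_Iic hz).neg.upperSemicontinuousWithinAt
  rw [← Ioi_insert]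
  exact upperSemicontinuousWithinAt_insert_of_tendsto (hf.tendsto_lml_nhdsGT hz).neg
    (neg_le_neg (hj z hz))

end Cadlag

theorem upperSemicontinuousOn_sub_lml {f₁ f₂ : ℝ → ℝ} (h₁ : Cadlag f₁) (h₂ : Cadlag f₂)
    (hj₁ : NonnegJumps f₁) (hj₂ : NonnegJumps f₂) :
    UpperSemicontinuousOn (fun z => f₂ z - lml f₁ z) (Ici 0) := by
  simpa only [sub_eq_add_neg] using
    (h₂.upperSemicontinuousOn hj₂).add (h₁.upperSemicontinuousOn_neg_lml hj₁)

theorem Real.sSup_le_sSup_of_nonneg {s t : Set ℝ} (ht : BddAbove t) (hst : s ⊆ t)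
    (h : 0 ≤ sSup t) : sSup s ≤ sSup t :=
  Real.sSup_le (fun _ ha => le_csSup ht (hst ha)) h

theorem UpperSemicontinuousOn.exists_first_le_of_le_sSup {g : ℝ → ℝ} {x y c : ℝ}
    (hg : UpperSemicontinuousOn g (Icc x y)) (hxy : x ≤ y) (hc : c ≤ sSup (g '' Icc x y)) :
    ∃ z ∈ Icc x y, c ≤ g z ∧ ∀ w ∈ Ico x z, g w < c := by
  obtain ⟨z₁, hz₁, hmax⟩ := hg.exists_isMaxOn (nonempty_Icc.2 hxy) isCompact_Icc
  have hT := hg.isCompact_inter_preimage_Ici isCompact_Icc c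
  have hTne : (Icc x y ∩ g ⁻¹' Ici c).Nonempty :=
    ⟨z₁, hz₁, hc.trans (csSup_le ((nonempty_Icc.2 hxy).image g) (forall_mem_image.2 hmax))⟩
  obtain ⟨hz, hcz⟩ := hT.sInf_mem hTne
  refine ⟨_, hz, hcz, fun w hw => lt_of_not_ge fun hcw => hw.2.not_ge ?_⟩
  exact csInf_le hT.bddBelow ⟨⟨hw.1, hw.2.le.trans hz.2⟩, hcw⟩

section RunningSup

variable {g : ℝ → ℝ} {x y z : ℝ}

-- `sSup ∅ = 0` in `ℝ`, so `s(0, 0⁻) = 0`; the hypothesis `0 ≤ g 0` keeps the running suprema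
-- monotone across this convention.
theorem sSup_image_Ico_zero_nonneg (hg0 : 0 ≤ g 0) (b : ℝ) : 0 ≤ sSup (g '' Ico 0 b) := by
  rcases le_or_gt b 0 with hb | hb
  · rw [Ico_eq_empty_of_le hb, image_empty, Real.sSup_empty]
  · exact Real.sSup_nonneg' ⟨g 0, mem_image_of_mem g ⟨le_rfl, hb⟩, hg0⟩

theorem sSup_image_Icc_zero_nonneg (hg0 : 0 ≤ g 0) (hz : 0 ≤ z) : 0 ≤ sSup (g '' Icc 0 z) :=
  Real.sSup_nonneg' ⟨g 0, mem_image_of_mem g ⟨le_rfl, hz⟩, hg0⟩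

theorem sSup_image_Icc_zero_eq_max (hb : BddAbove (g '' Icc 0 y)) (hg0 : 0 ≤ g 0) (hx : 0 ≤ x)
    (hxy : x ≤ y) :
    sSup (g '' Icc 0 y) = max (sSup (g '' Ico 0 x)) (sSup (g '' Icc x y)) := by
  have hsub : Ico 0 x ⊆ Icc 0 y := Ico_subset_Icc_self.trans (Icc_subset_Icc_right hxy)
  have hbxy : BddAbove (g '' Icc x y) := hb.mono (image_mono (Icc_subset_Icc_left hx))
  refine le_antisymm (Real.sSup_le (forall_mem_image.2 fun w hw => ?_)
    ((sSup_image_Ico_zero_nonneg hg0 x).trans (le_max_left _ _))) (max_le ?_ ?_)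
  · rcases lt_or_ge w x with hwx | hxw
    · exact le_max_of_le_left (le_csSup (hb.mono (image_mono hsub)) ⟨w, ⟨hw.1, hwx⟩, rfl⟩)
    · exact le_max_of_le_right (le_csSup hbxy ⟨w, ⟨hxw, hw.2⟩, rfl⟩)
  · exact Real.sSup_le_sSup_of_nonneg hb (image_mono hsub)
      (sSup_image_Icc_zero_nonneg hg0 (hx.trans hxy))
  · exact csSup_le_csSup hb ((nonempty_Icc.2 hxy).image g)
      (image_mono (Icc_subset_Icc_left hx))

theorem sub_sSup_image_Icc_zero_sub_sSup_image_Ico_zero_le (hb : BddAbove (g '' Icc 0 z))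
    (hg0 : 0 ≤ g 0) (hx : 0 ≤ x) (hxz : x ≤ z) :
    g z - sSup (g '' Icc 0 z) - sSup (g '' Ico 0 z) ≤
      min (g z) (sSup (g '' Ico 0 x)) - 2 * sSup (g '' Ico 0 x) := by
  have hgM : g z ≤ sSup (g '' Icc 0 z) := le_csSup hb ⟨z, ⟨hx.trans hxz, le_rfl⟩, rfl⟩
  have hAM : sSup (g '' Ico 0 x) ≤ sSup (g '' Icc 0 z) :=
    Real.sSup_le_sSup_of_nonneg hb (image_mono (Ico_subset_Icc_self.trans
      (Icc_subset_Icc_right hxz))) (sSup_image_Icc_zero_nonneg hg0 (hx.trans hxz))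
  have hAN : sSup (g '' Ico 0 x) ≤ sSup (g '' Ico 0 z) :=
    Real.sSup_le_sSup_of_nonneg (hb.mono (image_mono Ico_subset_Icc_self))
      (image_mono (Ico_subset_Ico_right hxz)) (sSup_image_Ico_zero_nonneg hg0 z)
  have hmaxM := max_le hgM hAM
  linarith [min_add_max (g z) (sSup (g '' Ico 0 x))]

theorem sub_sSup_image_Icc_zero_sub_sSup_image_Ico_zero_eq (hb : BddAbove (g '' Icc 0 z))
    (hg0 : 0 ≤ g 0) (hx : 0 ≤ x) (hxz : x ≤ z)
    (hbefore : ∀ w ∈ Ico x z, g w ≤ sSup (g '' Ico 0 x)) :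
    g z - sSup (g '' Icc 0 z) - sSup (g '' Ico 0 z) =
      min (g z) (sSup (g '' Ico 0 x)) - 2 * sSup (g '' Ico 0 x) := by
  set A := sSup (g '' Ico 0 x)
  have hA : 0 ≤ A := sSup_image_Ico_zero_nonneg hg0 x
  have hle : ∀ w ∈ Ico 0 z, g w ≤ A := fun w hw => by
    rcases lt_or_ge w x with hwx | hxw
    · exact le_csSup (hb.mono (image_mono (Ico_subset_Icc_self.trans
        (Icc_subset_Icc_right hxz)))) ⟨w, ⟨hw.1, hwx⟩, rfl⟩
    · exact hbefore w ⟨hxw, hw.2⟩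
  have hM : sSup (g '' Icc 0 z) ≤ max (g z) A := by
    refine Real.sSup_le (forall_mem_image.2 fun w hw => ?_) (hA.trans (le_max_right _ _))
    rcases hw.2.lt_or_eq with hwz | rfl
    · exact le_max_of_le_right (hle w ⟨hw.1, hwz⟩)
    · exact le_max_left _ _
  have hN : sSup (g '' Ico 0 z) ≤ A := Real.sSup_le (forall_mem_image.2 hle) hA
  refine le_antisymm (sub_sSup_image_Icc_zero_sub_sSup_image_Ico_zero_le hb hg0 hx hxz) ?_
  linarith [min_add_max (g z) A]

theorem UpperSemicontinuousOn.sSup_image_Icc_sub_sSup_image_Icc_sub_sSup_image_Ico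
    (hg : UpperSemicontinuousOn g (Icc 0 y)) (hg0 : 0 ≤ g 0) (hx : 0 ≤ x) (hxy : x ≤ y) :
    sSup (g '' Icc x y) - sSup (g '' Icc 0 y) - sSup (g '' Ico 0 x) =
      sSup ((fun z => g z - sSup (g '' Icc 0 z) - sSup (g '' Ico 0 z)) '' Icc x y) := by
  set A := sSup (g '' Ico 0 x)
  set B := sSup (g '' Icc x y)
  have hb := hg.bddAbove_of_isCompact isCompact_Icc
  have hbz : ∀ z ≤ y, BddAbove (g '' Icc 0 z) :=
    fun z hz => hb.mono (image_mono (Icc_subset_Icc_right hz))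
  have hgB : ∀ z ∈ Icc x y, g z ≤ B :=
    fun z hz => le_csSup (hb.mono (image_mono (Icc_subset_Icc_left hx))) ⟨z, hz, rfl⟩
  obtain ⟨z₀, hz₀, hcz₀, hbefore⟩ :=
    (hg.mono (Icc_subset_Icc_left hx)).exists_first_le_of_le_sSup hxy (min_le_right A B)
  have hgreatest : IsGreatest ((fun z => g z - sSup (g '' Icc 0 z) - sSup (g '' Ico 0 z)) ''
      Icc x y) (min A B - 2 * A) := by
    refine ⟨⟨z₀, hz₀, ?_⟩, forall_mem_image.2 fun z hz => ?_⟩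
    · dsimp only
      rw [sub_sSup_image_Icc_zero_sub_sSup_image_Ico_zero_eq (hbz z₀ hz₀.2) hg0 hx hz₀.1
        fun w hw => (hbefore w hw).le.trans (min_le_left A B)]
      congr 1
      exact le_antisymm (le_min (min_le_right _ _) ((min_le_left _ _).trans (hgB z₀ hz₀)))
        (le_min hcz₀ (min_le_left A B))
    · exact (sub_sSup_image_Icc_zero_sub_sSup_image_Ico_zero_le (hbz z hz.2) hg0 hx hz.1).trans
        (sub_le_sub_right (le_min (min_le_right _ _) ((min_le_left _ _).trans (hgB z hz))) _)
  rw [hgreatest.csSup_eq, sSup_image_Icc_zero_eq_max hb hg0 hx hxy]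
  linarith [min_add_max A B]

end RunningSup

theorem stmt8 (f₁ f₂ : ℝ → ℝ) (h₁ : Cadlag f₁) (h₂ : Cadlag f₂)
    (hj₁ : NonnegJumps f₁) (hj₂ : NonnegJumps f₂)
    (x y : ℝ) (hx : 0 ≤ x) (hxy : x ≤ y) :
    S f₁ f₂ x y - S f₁ f₂ 0 y - Sm f₁ f₂ 0 x
      = sSup ((fun z => S f₁ f₂ z z - S f₁ f₂ 0 z - Sm f₁ f₂ 0 z) '' Set.Icc x y) := by
  have hg0 : 0 ≤ f₂ 0 - lml f₁ 0 := by simpa [lml] using hj₂ 0 le_rfl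
  have key := ((upperSemicontinuousOn_sub_lml h₁ h₂ hj₁ hj₂).mono Icc_subset_Ici_self
    ).sSup_image_Icc_sub_sSup_image_Icc_sub_sSup_image_Ico hg0 hx hxy
  simpa only [S, Sm, Icc_self, image_singleton, csSup_singleton] using key
end
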